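/- Let $f : \mathbb{R}^n \to \mathbb{R}$ be twice continuously differentiable with Hessian Lipschitz constant $H_{Lip} > 0$ on the segment $[x, x+s]$. Let $g = \nabla f(x)$, $H = \nabla^2 f(x)$, $\lambda \geq 0$, and $\kappa_3, \sigma > 0$. If $\|g + (H + \lambda I)s\| \leq \lambda\|s\| + \kappa_3\|s\|^2$ and $\lambda \leq \sigma \|s\|$, then $\|\nabla f(x+s)\| \leq (\tfrac12 H_{Lip} + 2\sigma + \kappa_3)\|s\|^2$. -/

import Mathlib

open scoped NNReal

/-!
Let `G = ∇f`. Along `t ↦ x + t • s` the remainder `G (x + t • s) - G x - t • ∇²f(x) s` has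
derivative `(∇²f(x + t • s) - ∇²f(x)) s`, whose norm is at most `H_Lip ‖s‖² t`; the fencing
comparison with `t ↦ H_Lip ‖s‖² t² / 2` bounds the remainder at `t = 1` by `H_Lip ‖s‖² / 2`.
The triangle inequality with the residual condition and `λ ‖s‖ ≤ σ ‖s‖²` (used twice) gives
the claim.
-/

theorem ContDiff.gradient {F : Type*} [NormedAddCommGroup F] [InnerProductSpace ℝ F]
    [CompleteSpace F] {f : F → ℝ} {m n : WithTop ℕ∞} (hf : ContDiff ℝ n f) (hmn : m + 1 ≤ n) :
    ContDiff ℝ m (gradient f) :=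
  (InnerProductSpace.toDual ℝ F).symm.contDiff.comp (hf.fderiv_right hmn)

section LipschitzDerivative

variable {E F : Type*} [NormedAddCommGroup E] [NormedSpace ℝ E]
  [NormedAddCommGroup F] [NormedSpace ℝ F] {G : E → F} {x s : E} {K : ℝ≥0}

theorem add_smul_mem_segment {t : ℝ} (ht : t ∈ Set.Icc 0 1) : x + t • s ∈ segment ℝ x (x + s) := by
  rw [segment_eq_image']
  exact ⟨t, ht, by simp⟩

theorem norm_fderiv_add_smul_apply_sub_le
    (hlip : LipschitzOnWith K (fderiv ℝ G) (segment ℝ x (x + s))) {t : ℝ} (ht : t ∈ Set.Icc 0 1) :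
    ‖fderiv ℝ G (x + t • s) s - fderiv ℝ G x s‖ ≤ K * ‖s‖ ^ 2 * t := by
  have hdist : ‖fderiv ℝ G (x + t • s) - fderiv ℝ G x‖ ≤ K * (t * ‖s‖) := by
    simpa [dist_eq_norm, norm_smul, abs_of_nonneg ht.1] using
      hlip.dist_le_mul _ (add_smul_mem_segment ht) _ (left_mem_segment ℝ x (x + s))
  calc ‖fderiv ℝ G (x + t • s) s - fderiv ℝ G x s‖
      = ‖(fderiv ℝ G (x + t • s) - fderiv ℝ G x) s‖ := rfl
    _ ≤ ‖fderiv ℝ G (x + t • s) - fderiv ℝ G x‖ * ‖s‖ := ContinuousLinearMap.le_opNorm _ _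
    _ ≤ K * (t * ‖s‖) * ‖s‖ := by gcongr
    _ = K * ‖s‖ ^ 2 * t := by ring

theorem norm_image_sub_sub_fderiv_le_of_lipschitzOnWith
    (hG : ∀ y ∈ segment ℝ x (x + s), DifferentiableAt ℝ G y)
    (hlip : LipschitzOnWith K (fderiv ℝ G) (segment ℝ x (x + s))) :
    ‖G (x + s) - G x - fderiv ℝ G x s‖ ≤ K / 2 * ‖s‖ ^ 2 := by
  set ψ : ℝ → F := fun t => G (x + t • s) - G x - t • fderiv ℝ G x s
  have hψ : ∀ t ∈ Set.Icc (0 : ℝ) 1,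
      HasDerivAt ψ (fderiv ℝ G (x + t • s) s - fderiv ℝ G x s) t := by
    intro t ht
    have hline : HasDerivAt (fun t : ℝ => x + t • s) s t := by
      simpa using ((hasDerivAt_id t).smul_const s).const_add x
    exact ((((hG _ (add_smul_mem_segment ht)).hasFDerivAt.comp_hasDerivAt t hline).sub_const
      (G x)).sub ((hasDerivAt_id t).smul_const (fderiv ℝ G x s))).congr_deriv (by simp)
  have hB : ∀ t : ℝ, HasDerivAt (fun t => K / 2 * ‖s‖ ^ 2 * t ^ 2) (K * ‖s‖ ^ 2 * t) t :=
    fun t => ((hasDerivAt_pow 2 t).const_mul ((K : ℝ) / 2 * ‖s‖ ^ 2)).congr_deriv (by ring)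
  have hfence := image_norm_le_of_norm_deriv_right_le_deriv_boundary (f := ψ)
    (fun t ht => (hψ t ht).continuousAt.continuousWithinAt)
    (fun t ht => (hψ t (Set.Ico_subset_Icc_self ht)).hasDerivWithinAt)
    (by simp [ψ]) hB
    (fun t ht => norm_fderiv_add_smul_apply_sub_le hlip (Set.Ico_subset_Icc_self ht))
    (Set.right_mem_Icc.2 zero_le_one)
  simpa [ψ] using hfence

end LipschitzDerivative

theorem stmt_4_general {n : ℕ} (f : EuclideanSpace ℝ (Fin n) → ℝ)
    (x s : EuclideanSpace ℝ (Fin n)) (HLip lm κ₃ σ : ℝ)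
    (hHLip : 0 < HLip) (hlm : 0 ≤ lm)
    (hf : ContDiff ℝ 2 f)
    (hlip : LipschitzOnWith HLip.toNNReal (fun y => fderiv ℝ (gradient f) y)
      (segment ℝ x (x + s)))
    (h1 : ‖gradient f x + (fderiv ℝ (gradient f) x s + lm • s)‖ ≤ lm * ‖s‖ + κ₃ * ‖s‖ ^ 2)
    (h2 : lm ≤ σ * ‖s‖) :
    ‖gradient f (x + s)‖ ≤ ((1/2) * HLip + 2 * σ + κ₃) * ‖s‖ ^ 2 := by
  set G := gradient f
  have hG : Differentiable ℝ G := (hf.gradient (by norm_num)).differentiable one_ne_zero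
  have htaylor : ‖G (x + s) - G x - fderiv ℝ G x s‖ ≤ HLip / 2 * ‖s‖ ^ 2 := by
    simpa [Real.coe_toNNReal _ hHLip.le] using
      norm_image_sub_sub_fderiv_le_of_lipschitzOnWith (fun y _ => hG y) hlip
  have hlms : lm * ‖s‖ ≤ σ * ‖s‖ ^ 2 := by
    nlinarith [mul_le_mul_of_nonneg_right h2 (norm_nonneg s)]
  have hsmul : ‖lm • s‖ = lm * ‖s‖ := by rw [norm_smul, Real.norm_of_nonneg hlm]
  calc ‖G (x + s)‖
      = ‖(G (x + s) - G x - fderiv ℝ G x s) + (G x + (fderiv ℝ G x s + lm • s)) - lm • s‖ := by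
        congr 1; abel
    _ ≤ ‖G (x + s) - G x - fderiv ℝ G x s‖ + ‖G x + (fderiv ℝ G x s + lm • s)‖ + ‖lm • s‖ :=
        norm_sub_le_of_le (norm_add_le _ _) le_rfl
    _ ≤ HLip / 2 * ‖s‖ ^ 2 + (lm * ‖s‖ + κ₃ * ‖s‖ ^ 2) + lm * ‖s‖ := by
        rw [hsmul]; gcongr
    _ ≤ ((1/2) * HLip + 2 * σ + κ₃) * ‖s‖ ^ 2 := by linarith

theorem stmt_4 {n : ℕ} (f : EuclideanSpace ℝ (Fin n) → ℝ)
    (x s : EuclideanSpace ℝ (Fin n)) (HLip lm κ₃ σ : ℝ)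
    (hHLip : 0 < HLip) (hlm : 0 ≤ lm) (hκ₃ : 0 < κ₃) (hσ : 0 < σ)
    (hf : ContDiff ℝ 2 f)
    (hlip : LipschitzOnWith HLip.toNNReal (fun y => fderiv ℝ (gradient f) y)
      (segment ℝ x (x + s)))
    (h1 : ‖gradient f x + (fderiv ℝ (gradient f) x s + lm • s)‖ ≤ lm * ‖s‖ + κ₃ * ‖s‖ ^ 2)
    (h2 : lm ≤ σ * ‖s‖) :
    ‖gradient f (x + s)‖ ≤ ((1/2) * HLip + 2 * σ + κ₃) * ‖s‖ ^ 2 :=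
  stmt_4_general f x s HLip lm κ₃ σ hHLip hlm hf hlip h1 h2
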